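/- There exist two non-isomorphic connected simple graphs on 7 vertices with 15 edges that both attain eccentric connectivity index 65, disproving the uniqueness claim of Zhang, Liu, and Zhou's conjecture for n = 7, m = 15. -/

import Mathlib

/-- The eccentricity of a vertex: the maximum distance from it to any vertex. -/
noncomputable def ecc {V : Type*} [Fintype V] (G : SimpleGraph V) (v : V) : ℕ :=
  Finset.univ.sup fun w => G.dist v w

section helpers
variable {V : Type*} {G : SimpleGraph V} {u v : V}

lemma lb1 (h : G.Reachable u v) (h0 : u ≠ v) : 1 ≤ G.dist u v := by
  obtain ⟨p, hp⟩ := h.exists_walk_length_eq_dist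
  cases p with
  | nil => exact absurd rfl h0
  | cons ha q => simp [SimpleGraph.Walk.length_cons] at hp; omega

lemma lb2 (h : G.Reachable u v) (h0 : u ≠ v) (h1 : ¬G.Adj u v) : 2 ≤ G.dist u v := by
  obtain ⟨p, hp⟩ := h.exists_walk_length_eq_dist
  cases p with
  | nil => exact absurd rfl h0
  | cons ha q =>
    cases q with
    | nil => exact absurd ha h1
    | cons hb r => simp [SimpleGraph.Walk.length_cons] at hp; omega

lemma lb3 (h : G.Reachable u v) (h0 : u ≠ v) (h1 : ¬G.Adj u v)
    (h2 : ∀ x, ¬(G.Adj u x ∧ G.Adj x v)) : 3 ≤ G.dist u v := by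
  obtain ⟨p, hp⟩ := h.exists_walk_length_eq_dist
  cases p with
  | nil => exact absurd rfl h0
  | cons ha q =>
    cases q with
    | nil => exact absurd ha h1
    | cons hb r =>
      cases r with
      | nil => exact absurd ⟨ha, hb⟩ (h2 _)
      | cons hc s => simp [SimpleGraph.Walk.length_cons] at hp; omega

end helpers

def G1adj : Fin 7 → Fin 7 → Bool := fun a b => decide ((a.val, b.val) ∈ [(0, 1), (0, 2), (0, 3), (0, 4), (0, 5), (1, 2), (1, 3), (1, 4), (1, 5), (2, 3), (2, 4), (2, 5), (3, 4), (3, 5), (4, 6)] ∨ (b.val, a.val) ∈ [(0, 1), (0, 2), (0, 3), (0, 4), (0, 5), (1, 2), (1, 3), (1, 4), (1, 5), (2, 3), (2, 4), (2, 5), (3, 4), (3, 5), (4, 6)])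

def G1 : SimpleGraph (Fin 7) where
  Adj a b := G1adj a b
  symm := ⟨fun a b h => (by decide : ∀ a b : Fin 7, G1adj a b = true → G1adj b a = true) a b h⟩
  loopless := ⟨fun a h => (by decide : ∀ a : Fin 7, ¬(G1adj a a = true)) a h⟩

instance : DecidableRel G1.Adj := fun a b => inferInstanceAs (Decidable (G1adj a b = true))

lemma G1reach : ∀ v, G1.Reachable v 0 := by
  intro v
  fin_cases v
  · exact ⟨.nil⟩
  · exact ⟨(.cons (show G1.Adj 1 0 by decide) .nil)⟩
  · exact ⟨(.cons (show G1.Adj 2 0 by decide) .nil)⟩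
  · exact ⟨(.cons (show G1.Adj 3 0 by decide) .nil)⟩
  · exact ⟨(.cons (show G1.Adj 4 0 by decide) .nil)⟩
  · exact ⟨(.cons (show G1.Adj 5 0 by decide) .nil)⟩
  · exact ⟨(.cons (show G1.Adj 6 4 by decide) (.cons (show G1.Adj 4 0 by decide) .nil))⟩

lemma G1conn : G1.Connected := (SimpleGraph.connected_iff G1).mpr ⟨fun u v => (G1reach u).trans (G1reach v).symm, ⟨0⟩⟩

lemma G1d00 : G1.dist (0:Fin 7) 0 = 0 := SimpleGraph.dist_self

lemma G1d01 : G1.dist (0:Fin 7) 1 = 1 := le_antisymm (le_trans (SimpleGraph.dist_le (.cons (show G1.Adj 0 1 by decide) .nil)) (by simp)) (lb1 ((G1reach 0).trans (G1reach 1).symm) (by decide))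

lemma G1d02 : G1.dist (0:Fin 7) 2 = 1 := le_antisymm (le_trans (SimpleGraph.dist_le (.cons (show G1.Adj 0 2 by decide) .nil)) (by simp)) (lb1 ((G1reach 0).trans (G1reach 2).symm) (by decide))

lemma G1d03 : G1.dist (0:Fin 7) 3 = 1 := le_antisymm (le_trans (SimpleGraph.dist_le (.cons (show G1.Adj 0 3 by decide) .nil)) (by simp)) (lb1 ((G1reach 0).trans (G1reach 3).symm) (by decide))

lemma G1d04 : G1.dist (0:Fin 7) 4 = 1 := le_antisymm (le_trans (SimpleGraph.dist_le (.cons (show G1.Adj 0 4 by decide) .nil)) (by simp)) (lb1 ((G1reach 0).trans (G1reach 4).symm) (by decide))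

lemma G1d05 : G1.dist (0:Fin 7) 5 = 1 := le_antisymm (le_trans (SimpleGraph.dist_le (.cons (show G1.Adj 0 5 by decide) .nil)) (by simp)) (lb1 ((G1reach 0).trans (G1reach 5).symm) (by decide))

lemma G1d06 : G1.dist (0:Fin 7) 6 = 2 := le_antisymm (le_trans (SimpleGraph.dist_le (.cons (show G1.Adj 0 4 by decide) (.cons (show G1.Adj 4 6 by decide) .nil))) (by simp)) (lb2 ((G1reach 0).trans (G1reach 6).symm) (by decide) (by decide))

lemma G1d10 : G1.dist (1:Fin 7) 0 = 1 := le_antisymm (le_trans (SimpleGraph.dist_le (.cons (show G1.Adj 1 0 by decide) .nil)) (by simp)) (lb1 ((G1reach 1).trans (G1reach 0).symm) (by decide))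

lemma G1d11 : G1.dist (1:Fin 7) 1 = 0 := SimpleGraph.dist_self

lemma G1d12 : G1.dist (1:Fin 7) 2 = 1 := le_antisymm (le_trans (SimpleGraph.dist_le (.cons (show G1.Adj 1 2 by decide) .nil)) (by simp)) (lb1 ((G1reach 1).trans (G1reach 2).symm) (by decide))

lemma G1d13 : G1.dist (1:Fin 7) 3 = 1 := le_antisymm (le_trans (SimpleGraph.dist_le (.cons (show G1.Adj 1 3 by decide) .nil)) (by simp)) (lb1 ((G1reach 1).trans (G1reach 3).symm) (by decide))

lemma G1d14 : G1.dist (1:Fin 7) 4 = 1 := le_antisymm (le_trans (SimpleGraph.dist_le (.cons (show G1.Adj 1 4 by decide) .nil)) (by simp)) (lb1 ((G1reach 1).trans (G1reach 4).symm) (by decide))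

lemma G1d15 : G1.dist (1:Fin 7) 5 = 1 := le_antisymm (le_trans (SimpleGraph.dist_le (.cons (show G1.Adj 1 5 by decide) .nil)) (by simp)) (lb1 ((G1reach 1).trans (G1reach 5).symm) (by decide))

lemma G1d16 : G1.dist (1:Fin 7) 6 = 2 := le_antisymm (le_trans (SimpleGraph.dist_le (.cons (show G1.Adj 1 4 by decide) (.cons (show G1.Adj 4 6 by decide) .nil))) (by simp)) (lb2 ((G1reach 1).trans (G1reach 6).symm) (by decide) (by decide))

lemma G1d20 : G1.dist (2:Fin 7) 0 = 1 := le_antisymm (le_trans (SimpleGraph.dist_le (.cons (show G1.Adj 2 0 by decide) .nil)) (by simp)) (lb1 ((G1reach 2).trans (G1reach 0).symm) (by decide))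

lemma G1d21 : G1.dist (2:Fin 7) 1 = 1 := le_antisymm (le_trans (SimpleGraph.dist_le (.cons (show G1.Adj 2 1 by decide) .nil)) (by simp)) (lb1 ((G1reach 2).trans (G1reach 1).symm) (by decide))

lemma G1d22 : G1.dist (2:Fin 7) 2 = 0 := SimpleGraph.dist_self

lemma G1d23 : G1.dist (2:Fin 7) 3 = 1 := le_antisymm (le_trans (SimpleGraph.dist_le (.cons (show G1.Adj 2 3 by decide) .nil)) (by simp)) (lb1 ((G1reach 2).trans (G1reach 3).symm) (by decide))

lemma G1d24 : G1.dist (2:Fin 7) 4 = 1 := le_antisymm (le_trans (SimpleGraph.dist_le (.cons (show G1.Adj 2 4 by decide) .nil)) (by simp)) (lb1 ((G1reach 2).trans (G1reach 4).symm) (by decide))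

lemma G1d25 : G1.dist (2:Fin 7) 5 = 1 := le_antisymm (le_trans (SimpleGraph.dist_le (.cons (show G1.Adj 2 5 by decide) .nil)) (by simp)) (lb1 ((G1reach 2).trans (G1reach 5).symm) (by decide))

lemma G1d26 : G1.dist (2:Fin 7) 6 = 2 := le_antisymm (le_trans (SimpleGraph.dist_le (.cons (show G1.Adj 2 4 by decide) (.cons (show G1.Adj 4 6 by decide) .nil))) (by simp)) (lb2 ((G1reach 2).trans (G1reach 6).symm) (by decide) (by decide))

lemma G1d30 : G1.dist (3:Fin 7) 0 = 1 := le_antisymm (le_trans (SimpleGraph.dist_le (.cons (show G1.Adj 3 0 by decide) .nil)) (by simp)) (lb1 ((G1reach 3).trans (G1reach 0).symm) (by decide))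

lemma G1d31 : G1.dist (3:Fin 7) 1 = 1 := le_antisymm (le_trans (SimpleGraph.dist_le (.cons (show G1.Adj 3 1 by decide) .nil)) (by simp)) (lb1 ((G1reach 3).trans (G1reach 1).symm) (by decide))

lemma G1d32 : G1.dist (3:Fin 7) 2 = 1 := le_antisymm (le_trans (SimpleGraph.dist_le (.cons (show G1.Adj 3 2 by decide) .nil)) (by simp)) (lb1 ((G1reach 3).trans (G1reach 2).symm) (by decide))

lemma G1d33 : G1.dist (3:Fin 7) 3 = 0 := SimpleGraph.dist_self

lemma G1d34 : G1.dist (3:Fin 7) 4 = 1 := le_antisymm (le_trans (SimpleGraph.dist_le (.cons (show G1.Adj 3 4 by decide) .nil)) (by simp)) (lb1 ((G1reach 3).trans (G1reach 4).symm) (by decide))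

lemma G1d35 : G1.dist (3:Fin 7) 5 = 1 := le_antisymm (le_trans (SimpleGraph.dist_le (.cons (show G1.Adj 3 5 by decide) .nil)) (by simp)) (lb1 ((G1reach 3).trans (G1reach 5).symm) (by decide))

lemma G1d36 : G1.dist (3:Fin 7) 6 = 2 := le_antisymm (le_trans (SimpleGraph.dist_le (.cons (show G1.Adj 3 4 by decide) (.cons (show G1.Adj 4 6 by decide) .nil))) (by simp)) (lb2 ((G1reach 3).trans (G1reach 6).symm) (by decide) (by decide))

lemma G1d40 : G1.dist (4:Fin 7) 0 = 1 := le_antisymm (le_trans (SimpleGraph.dist_le (.cons (show G1.Adj 4 0 by decide) .nil)) (by simp)) (lb1 ((G1reach 4).trans (G1reach 0).symm) (by decide))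

lemma G1d41 : G1.dist (4:Fin 7) 1 = 1 := le_antisymm (le_trans (SimpleGraph.dist_le (.cons (show G1.Adj 4 1 by decide) .nil)) (by simp)) (lb1 ((G1reach 4).trans (G1reach 1).symm) (by decide))

lemma G1d42 : G1.dist (4:Fin 7) 2 = 1 := le_antisymm (le_trans (SimpleGraph.dist_le (.cons (show G1.Adj 4 2 by decide) .nil)) (by simp)) (lb1 ((G1reach 4).trans (G1reach 2).symm) (by decide))

lemma G1d43 : G1.dist (4:Fin 7) 3 = 1 := le_antisymm (le_trans (SimpleGraph.dist_le (.cons (show G1.Adj 4 3 by decide) .nil)) (by simp)) (lb1 ((G1reach 4).trans (G1reach 3).symm) (by decide))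

lemma G1d44 : G1.dist (4:Fin 7) 4 = 0 := SimpleGraph.dist_self

lemma G1d45 : G1.dist (4:Fin 7) 5 = 2 := le_antisymm (le_trans (SimpleGraph.dist_le (.cons (show G1.Adj 4 0 by decide) (.cons (show G1.Adj 0 5 by decide) .nil))) (by simp)) (lb2 ((G1reach 4).trans (G1reach 5).symm) (by decide) (by decide))

lemma G1d46 : G1.dist (4:Fin 7) 6 = 1 := le_antisymm (le_trans (SimpleGraph.dist_le (.cons (show G1.Adj 4 6 by decide) .nil)) (by simp)) (lb1 ((G1reach 4).trans (G1reach 6).symm) (by decide))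

lemma G1d50 : G1.dist (5:Fin 7) 0 = 1 := le_antisymm (le_trans (SimpleGraph.dist_le (.cons (show G1.Adj 5 0 by decide) .nil)) (by simp)) (lb1 ((G1reach 5).trans (G1reach 0).symm) (by decide))

lemma G1d51 : G1.dist (5:Fin 7) 1 = 1 := le_antisymm (le_trans (SimpleGraph.dist_le (.cons (show G1.Adj 5 1 by decide) .nil)) (by simp)) (lb1 ((G1reach 5).trans (G1reach 1).symm) (by decide))

lemma G1d52 : G1.dist (5:Fin 7) 2 = 1 := le_antisymm (le_trans (SimpleGraph.dist_le (.cons (show G1.Adj 5 2 by decide) .nil)) (by simp)) (lb1 ((G1reach 5).trans (G1reach 2).symm) (by decide))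

lemma G1d53 : G1.dist (5:Fin 7) 3 = 1 := le_antisymm (le_trans (SimpleGraph.dist_le (.cons (show G1.Adj 5 3 by decide) .nil)) (by simp)) (lb1 ((G1reach 5).trans (G1reach 3).symm) (by decide))

lemma G1d54 : G1.dist (5:Fin 7) 4 = 2 := le_antisymm (le_trans (SimpleGraph.dist_le (.cons (show G1.Adj 5 0 by decide) (.cons (show G1.Adj 0 4 by decide) .nil))) (by simp)) (lb2 ((G1reach 5).trans (G1reach 4).symm) (by decide) (by decide))

lemma G1d55 : G1.dist (5:Fin 7) 5 = 0 := SimpleGraph.dist_self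

lemma G1d56 : G1.dist (5:Fin 7) 6 = 3 := le_antisymm (le_trans (SimpleGraph.dist_le (.cons (show G1.Adj 5 0 by decide) (.cons (show G1.Adj 0 4 by decide) (.cons (show G1.Adj 4 6 by decide) .nil)))) (by simp)) (lb3 ((G1reach 5).trans (G1reach 6).symm) (by decide) (by decide) (by decide))

lemma G1d60 : G1.dist (6:Fin 7) 0 = 2 := le_antisymm (le_trans (SimpleGraph.dist_le (.cons (show G1.Adj 6 4 by decide) (.cons (show G1.Adj 4 0 by decide) .nil))) (by simp)) (lb2 ((G1reach 6).trans (G1reach 0).symm) (by decide) (by decide))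

lemma G1d61 : G1.dist (6:Fin 7) 1 = 2 := le_antisymm (le_trans (SimpleGraph.dist_le (.cons (show G1.Adj 6 4 by decide) (.cons (show G1.Adj 4 1 by decide) .nil))) (by simp)) (lb2 ((G1reach 6).trans (G1reach 1).symm) (by decide) (by decide))

lemma G1d62 : G1.dist (6:Fin 7) 2 = 2 := le_antisymm (le_trans (SimpleGraph.dist_le (.cons (show G1.Adj 6 4 by decide) (.cons (show G1.Adj 4 2 by decide) .nil))) (by simp)) (lb2 ((G1reach 6).trans (G1reach 2).symm) (by decide) (by decide))

lemma G1d63 : G1.dist (6:Fin 7) 3 = 2 := le_antisymm (le_trans (SimpleGraph.dist_le (.cons (show G1.Adj 6 4 by decide) (.cons (show G1.Adj 4 3 by decide) .nil))) (by simp)) (lb2 ((G1reach 6).trans (G1reach 3).symm) (by decide) (by decide))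

lemma G1d64 : G1.dist (6:Fin 7) 4 = 1 := le_antisymm (le_trans (SimpleGraph.dist_le (.cons (show G1.Adj 6 4 by decide) .nil)) (by simp)) (lb1 ((G1reach 6).trans (G1reach 4).symm) (by decide))

lemma G1d65 : G1.dist (6:Fin 7) 5 = 3 := le_antisymm (le_trans (SimpleGraph.dist_le (.cons (show G1.Adj 6 4 by decide) (.cons (show G1.Adj 4 0 by decide) (.cons (show G1.Adj 0 5 by decide) .nil)))) (by simp)) (lb3 ((G1reach 6).trans (G1reach 5).symm) (by decide) (by decide) (by decide))

lemma G1d66 : G1.dist (6:Fin 7) 6 = 0 := SimpleGraph.dist_self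

lemma G1e0 : ecc G1 (0:Fin 7) = 2 := by
  refine le_antisymm (Finset.sup_le fun w _ => ?_) (le_trans (le_of_eq G1d06.symm) (Finset.le_sup (Finset.mem_univ (6:Fin 7))))
  fin_cases w <;> simp [G1d00, G1d01, G1d02, G1d03, G1d04, G1d05, G1d06]

lemma G1e1 : ecc G1 (1:Fin 7) = 2 := by
  refine le_antisymm (Finset.sup_le fun w _ => ?_) (le_trans (le_of_eq G1d16.symm) (Finset.le_sup (Finset.mem_univ (6:Fin 7))))
  fin_cases w <;> simp [G1d10, G1d11, G1d12, G1d13, G1d14, G1d15, G1d16]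

lemma G1e2 : ecc G1 (2:Fin 7) = 2 := by
  refine le_antisymm (Finset.sup_le fun w _ => ?_) (le_trans (le_of_eq G1d26.symm) (Finset.le_sup (Finset.mem_univ (6:Fin 7))))
  fin_cases w <;> simp [G1d20, G1d21, G1d22, G1d23, G1d24, G1d25, G1d26]

lemma G1e3 : ecc G1 (3:Fin 7) = 2 := by
  refine le_antisymm (Finset.sup_le fun w _ => ?_) (le_trans (le_of_eq G1d36.symm) (Finset.le_sup (Finset.mem_univ (6:Fin 7))))
  fin_cases w <;> simp [G1d30, G1d31, G1d32, G1d33, G1d34, G1d35, G1d36]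

lemma G1e4 : ecc G1 (4:Fin 7) = 2 := by
  refine le_antisymm (Finset.sup_le fun w _ => ?_) (le_trans (le_of_eq G1d45.symm) (Finset.le_sup (Finset.mem_univ (5:Fin 7))))
  fin_cases w <;> simp [G1d40, G1d41, G1d42, G1d43, G1d44, G1d45, G1d46]

lemma G1e5 : ecc G1 (5:Fin 7) = 3 := by
  refine le_antisymm (Finset.sup_le fun w _ => ?_) (le_trans (le_of_eq G1d56.symm) (Finset.le_sup (Finset.mem_univ (6:Fin 7))))
  fin_cases w <;> simp [G1d50, G1d51, G1d52, G1d53, G1d54, G1d55, G1d56]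

lemma G1e6 : ecc G1 (6:Fin 7) = 3 := by
  refine le_antisymm (Finset.sup_le fun w _ => ?_) (le_trans (le_of_eq G1d65.symm) (Finset.le_sup (Finset.mem_univ (5:Fin 7))))
  fin_cases w <;> simp [G1d60, G1d61, G1d62, G1d63, G1d64, G1d65, G1d66]

def G2adj : Fin 7 → Fin 7 → Bool := fun a b => decide ((a.val, b.val) ∈ [(0, 1), (0, 2), (0, 3), (0, 4), (0, 5), (1, 2), (1, 3), (1, 4), (1, 5), (2, 3), (2, 4), (2, 5), (3, 4), (3, 6), (4, 6)] ∨ (b.val, a.val) ∈ [(0, 1), (0, 2), (0, 3), (0, 4), (0, 5), (1, 2), (1, 3), (1, 4), (1, 5), (2, 3), (2, 4), (2, 5), (3, 4), (3, 6), (4, 6)])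

def G2 : SimpleGraph (Fin 7) where
  Adj a b := G2adj a b
  symm := ⟨fun a b h => (by decide : ∀ a b : Fin 7, G2adj a b = true → G2adj b a = true) a b h⟩
  loopless := ⟨fun a h => (by decide : ∀ a : Fin 7, ¬(G2adj a a = true)) a h⟩

instance : DecidableRel G2.Adj := fun a b => inferInstanceAs (Decidable (G2adj a b = true))

lemma G2reach : ∀ v, G2.Reachable v 0 := by
  intro v
  fin_cases v
  · exact ⟨.nil⟩
  · exact ⟨(.cons (show G2.Adj 1 0 by decide) .nil)⟩
  · exact ⟨(.cons (show G2.Adj 2 0 by decide) .nil)⟩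
  · exact ⟨(.cons (show G2.Adj 3 0 by decide) .nil)⟩
  · exact ⟨(.cons (show G2.Adj 4 0 by decide) .nil)⟩
  · exact ⟨(.cons (show G2.Adj 5 0 by decide) .nil)⟩
  · exact ⟨(.cons (show G2.Adj 6 3 by decide) (.cons (show G2.Adj 3 0 by decide) .nil))⟩

lemma G2conn : G2.Connected := (SimpleGraph.connected_iff G2).mpr ⟨fun u v => (G2reach u).trans (G2reach v).symm, ⟨0⟩⟩

lemma G2d00 : G2.dist (0:Fin 7) 0 = 0 := SimpleGraph.dist_self

lemma G2d01 : G2.dist (0:Fin 7) 1 = 1 := le_antisymm (le_trans (SimpleGraph.dist_le (.cons (show G2.Adj 0 1 by decide) .nil)) (by simp)) (lb1 ((G2reach 0).trans (G2reach 1).symm) (by decide))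

lemma G2d02 : G2.dist (0:Fin 7) 2 = 1 := le_antisymm (le_trans (SimpleGraph.dist_le (.cons (show G2.Adj 0 2 by decide) .nil)) (by simp)) (lb1 ((G2reach 0).trans (G2reach 2).symm) (by decide))

lemma G2d03 : G2.dist (0:Fin 7) 3 = 1 := le_antisymm (le_trans (SimpleGraph.dist_le (.cons (show G2.Adj 0 3 by decide) .nil)) (by simp)) (lb1 ((G2reach 0).trans (G2reach 3).symm) (by decide))

lemma G2d04 : G2.dist (0:Fin 7) 4 = 1 := le_antisymm (le_trans (SimpleGraph.dist_le (.cons (show G2.Adj 0 4 by decide) .nil)) (by simp)) (lb1 ((G2reach 0).trans (G2reach 4).symm) (by decide))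

lemma G2d05 : G2.dist (0:Fin 7) 5 = 1 := le_antisymm (le_trans (SimpleGraph.dist_le (.cons (show G2.Adj 0 5 by decide) .nil)) (by simp)) (lb1 ((G2reach 0).trans (G2reach 5).symm) (by decide))

lemma G2d06 : G2.dist (0:Fin 7) 6 = 2 := le_antisymm (le_trans (SimpleGraph.dist_le (.cons (show G2.Adj 0 3 by decide) (.cons (show G2.Adj 3 6 by decide) .nil))) (by simp)) (lb2 ((G2reach 0).trans (G2reach 6).symm) (by decide) (by decide))

lemma G2d10 : G2.dist (1:Fin 7) 0 = 1 := le_antisymm (le_trans (SimpleGraph.dist_le (.cons (show G2.Adj 1 0 by decide) .nil)) (by simp)) (lb1 ((G2reach 1).trans (G2reach 0).symm) (by decide))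

lemma G2d11 : G2.dist (1:Fin 7) 1 = 0 := SimpleGraph.dist_self

lemma G2d12 : G2.dist (1:Fin 7) 2 = 1 := le_antisymm (le_trans (SimpleGraph.dist_le (.cons (show G2.Adj 1 2 by decide) .nil)) (by simp)) (lb1 ((G2reach 1).trans (G2reach 2).symm) (by decide))

lemma G2d13 : G2.dist (1:Fin 7) 3 = 1 := le_antisymm (le_trans (SimpleGraph.dist_le (.cons (show G2.Adj 1 3 by decide) .nil)) (by simp)) (lb1 ((G2reach 1).trans (G2reach 3).symm) (by decide))

lemma G2d14 : G2.dist (1:Fin 7) 4 = 1 := le_antisymm (le_trans (SimpleGraph.dist_le (.cons (show G2.Adj 1 4 by decide) .nil)) (by simp)) (lb1 ((G2reach 1).trans (G2reach 4).symm) (by decide))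

lemma G2d15 : G2.dist (1:Fin 7) 5 = 1 := le_antisymm (le_trans (SimpleGraph.dist_le (.cons (show G2.Adj 1 5 by decide) .nil)) (by simp)) (lb1 ((G2reach 1).trans (G2reach 5).symm) (by decide))

lemma G2d16 : G2.dist (1:Fin 7) 6 = 2 := le_antisymm (le_trans (SimpleGraph.dist_le (.cons (show G2.Adj 1 3 by decide) (.cons (show G2.Adj 3 6 by decide) .nil))) (by simp)) (lb2 ((G2reach 1).trans (G2reach 6).symm) (by decide) (by decide))

lemma G2d20 : G2.dist (2:Fin 7) 0 = 1 := le_antisymm (le_trans (SimpleGraph.dist_le (.cons (show G2.Adj 2 0 by decide) .nil)) (by simp)) (lb1 ((G2reach 2).trans (G2reach 0).symm) (by decide))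

lemma G2d21 : G2.dist (2:Fin 7) 1 = 1 := le_antisymm (le_trans (SimpleGraph.dist_le (.cons (show G2.Adj 2 1 by decide) .nil)) (by simp)) (lb1 ((G2reach 2).trans (G2reach 1).symm) (by decide))

lemma G2d22 : G2.dist (2:Fin 7) 2 = 0 := SimpleGraph.dist_self

lemma G2d23 : G2.dist (2:Fin 7) 3 = 1 := le_antisymm (le_trans (SimpleGraph.dist_le (.cons (show G2.Adj 2 3 by decide) .nil)) (by simp)) (lb1 ((G2reach 2).trans (G2reach 3).symm) (by decide))

lemma G2d24 : G2.dist (2:Fin 7) 4 = 1 := le_antisymm (le_trans (SimpleGraph.dist_le (.cons (show G2.Adj 2 4 by decide) .nil)) (by simp)) (lb1 ((G2reach 2).trans (G2reach 4).symm) (by decide))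

lemma G2d25 : G2.dist (2:Fin 7) 5 = 1 := le_antisymm (le_trans (SimpleGraph.dist_le (.cons (show G2.Adj 2 5 by decide) .nil)) (by simp)) (lb1 ((G2reach 2).trans (G2reach 5).symm) (by decide))

lemma G2d26 : G2.dist (2:Fin 7) 6 = 2 := le_antisymm (le_trans (SimpleGraph.dist_le (.cons (show G2.Adj 2 3 by decide) (.cons (show G2.Adj 3 6 by decide) .nil))) (by simp)) (lb2 ((G2reach 2).trans (G2reach 6).symm) (by decide) (by decide))

lemma G2d30 : G2.dist (3:Fin 7) 0 = 1 := le_antisymm (le_trans (SimpleGraph.dist_le (.cons (show G2.Adj 3 0 by decide) .nil)) (by simp)) (lb1 ((G2reach 3).trans (G2reach 0).symm) (by decide))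

lemma G2d31 : G2.dist (3:Fin 7) 1 = 1 := le_antisymm (le_trans (SimpleGraph.dist_le (.cons (show G2.Adj 3 1 by decide) .nil)) (by simp)) (lb1 ((G2reach 3).trans (G2reach 1).symm) (by decide))

lemma G2d32 : G2.dist (3:Fin 7) 2 = 1 := le_antisymm (le_trans (SimpleGraph.dist_le (.cons (show G2.Adj 3 2 by decide) .nil)) (by simp)) (lb1 ((G2reach 3).trans (G2reach 2).symm) (by decide))

lemma G2d33 : G2.dist (3:Fin 7) 3 = 0 := SimpleGraph.dist_self

lemma G2d34 : G2.dist (3:Fin 7) 4 = 1 := le_antisymm (le_trans (SimpleGraph.dist_le (.cons (show G2.Adj 3 4 by decide) .nil)) (by simp)) (lb1 ((G2reach 3).trans (G2reach 4).symm) (by decide))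

lemma G2d35 : G2.dist (3:Fin 7) 5 = 2 := le_antisymm (le_trans (SimpleGraph.dist_le (.cons (show G2.Adj 3 0 by decide) (.cons (show G2.Adj 0 5 by decide) .nil))) (by simp)) (lb2 ((G2reach 3).trans (G2reach 5).symm) (by decide) (by decide))

lemma G2d36 : G2.dist (3:Fin 7) 6 = 1 := le_antisymm (le_trans (SimpleGraph.dist_le (.cons (show G2.Adj 3 6 by decide) .nil)) (by simp)) (lb1 ((G2reach 3).trans (G2reach 6).symm) (by decide))

lemma G2d40 : G2.dist (4:Fin 7) 0 = 1 := le_antisymm (le_trans (SimpleGraph.dist_le (.cons (show G2.Adj 4 0 by decide) .nil)) (by simp)) (lb1 ((G2reach 4).trans (G2reach 0).symm) (by decide))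

lemma G2d41 : G2.dist (4:Fin 7) 1 = 1 := le_antisymm (le_trans (SimpleGraph.dist_le (.cons (show G2.Adj 4 1 by decide) .nil)) (by simp)) (lb1 ((G2reach 4).trans (G2reach 1).symm) (by decide))

lemma G2d42 : G2.dist (4:Fin 7) 2 = 1 := le_antisymm (le_trans (SimpleGraph.dist_le (.cons (show G2.Adj 4 2 by decide) .nil)) (by simp)) (lb1 ((G2reach 4).trans (G2reach 2).symm) (by decide))

lemma G2d43 : G2.dist (4:Fin 7) 3 = 1 := le_antisymm (le_trans (SimpleGraph.dist_le (.cons (show G2.Adj 4 3 by decide) .nil)) (by simp)) (lb1 ((G2reach 4).trans (G2reach 3).symm) (by decide))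

lemma G2d44 : G2.dist (4:Fin 7) 4 = 0 := SimpleGraph.dist_self

lemma G2d45 : G2.dist (4:Fin 7) 5 = 2 := le_antisymm (le_trans (SimpleGraph.dist_le (.cons (show G2.Adj 4 0 by decide) (.cons (show G2.Adj 0 5 by decide) .nil))) (by simp)) (lb2 ((G2reach 4).trans (G2reach 5).symm) (by decide) (by decide))

lemma G2d46 : G2.dist (4:Fin 7) 6 = 1 := le_antisymm (le_trans (SimpleGraph.dist_le (.cons (show G2.Adj 4 6 by decide) .nil)) (by simp)) (lb1 ((G2reach 4).trans (G2reach 6).symm) (by decide))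

lemma G2d50 : G2.dist (5:Fin 7) 0 = 1 := le_antisymm (le_trans (SimpleGraph.dist_le (.cons (show G2.Adj 5 0 by decide) .nil)) (by simp)) (lb1 ((G2reach 5).trans (G2reach 0).symm) (by decide))

lemma G2d51 : G2.dist (5:Fin 7) 1 = 1 := le_antisymm (le_trans (SimpleGraph.dist_le (.cons (show G2.Adj 5 1 by decide) .nil)) (by simp)) (lb1 ((G2reach 5).trans (G2reach 1).symm) (by decide))

lemma G2d52 : G2.dist (5:Fin 7) 2 = 1 := le_antisymm (le_trans (SimpleGraph.dist_le (.cons (show G2.Adj 5 2 by decide) .nil)) (by simp)) (lb1 ((G2reach 5).trans (G2reach 2).symm) (by decide))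

lemma G2d53 : G2.dist (5:Fin 7) 3 = 2 := le_antisymm (le_trans (SimpleGraph.dist_le (.cons (show G2.Adj 5 0 by decide) (.cons (show G2.Adj 0 3 by decide) .nil))) (by simp)) (lb2 ((G2reach 5).trans (G2reach 3).symm) (by decide) (by decide))

lemma G2d54 : G2.dist (5:Fin 7) 4 = 2 := le_antisymm (le_trans (SimpleGraph.dist_le (.cons (show G2.Adj 5 0 by decide) (.cons (show G2.Adj 0 4 by decide) .nil))) (by simp)) (lb2 ((G2reach 5).trans (G2reach 4).symm) (by decide) (by decide))

lemma G2d55 : G2.dist (5:Fin 7) 5 = 0 := SimpleGraph.dist_self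

lemma G2d56 : G2.dist (5:Fin 7) 6 = 3 := le_antisymm (le_trans (SimpleGraph.dist_le (.cons (show G2.Adj 5 0 by decide) (.cons (show G2.Adj 0 3 by decide) (.cons (show G2.Adj 3 6 by decide) .nil)))) (by simp)) (lb3 ((G2reach 5).trans (G2reach 6).symm) (by decide) (by decide) (by decide))

lemma G2d60 : G2.dist (6:Fin 7) 0 = 2 := le_antisymm (le_trans (SimpleGraph.dist_le (.cons (show G2.Adj 6 3 by decide) (.cons (show G2.Adj 3 0 by decide) .nil))) (by simp)) (lb2 ((G2reach 6).trans (G2reach 0).symm) (by decide) (by decide))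

lemma G2d61 : G2.dist (6:Fin 7) 1 = 2 := le_antisymm (le_trans (SimpleGraph.dist_le (.cons (show G2.Adj 6 3 by decide) (.cons (show G2.Adj 3 1 by decide) .nil))) (by simp)) (lb2 ((G2reach 6).trans (G2reach 1).symm) (by decide) (by decide))

lemma G2d62 : G2.dist (6:Fin 7) 2 = 2 := le_antisymm (le_trans (SimpleGraph.dist_le (.cons (show G2.Adj 6 3 by decide) (.cons (show G2.Adj 3 2 by decide) .nil))) (by simp)) (lb2 ((G2reach 6).trans (G2reach 2).symm) (by decide) (by decide))

lemma G2d63 : G2.dist (6:Fin 7) 3 = 1 := le_antisymm (le_trans (SimpleGraph.dist_le (.cons (show G2.Adj 6 3 by decide) .nil)) (by simp)) (lb1 ((G2reach 6).trans (G2reach 3).symm) (by decide))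

lemma G2d64 : G2.dist (6:Fin 7) 4 = 1 := le_antisymm (le_trans (SimpleGraph.dist_le (.cons (show G2.Adj 6 4 by decide) .nil)) (by simp)) (lb1 ((G2reach 6).trans (G2reach 4).symm) (by decide))

lemma G2d65 : G2.dist (6:Fin 7) 5 = 3 := le_antisymm (le_trans (SimpleGraph.dist_le (.cons (show G2.Adj 6 3 by decide) (.cons (show G2.Adj 3 0 by decide) (.cons (show G2.Adj 0 5 by decide) .nil)))) (by simp)) (lb3 ((G2reach 6).trans (G2reach 5).symm) (by decide) (by decide) (by decide))

lemma G2d66 : G2.dist (6:Fin 7) 6 = 0 := SimpleGraph.dist_self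

lemma G2e0 : ecc G2 (0:Fin 7) = 2 := by
  refine le_antisymm (Finset.sup_le fun w _ => ?_) (le_trans (le_of_eq G2d06.symm) (Finset.le_sup (Finset.mem_univ (6:Fin 7))))
  fin_cases w <;> simp [G2d00, G2d01, G2d02, G2d03, G2d04, G2d05, G2d06]

lemma G2e1 : ecc G2 (1:Fin 7) = 2 := by
  refine le_antisymm (Finset.sup_le fun w _ => ?_) (le_trans (le_of_eq G2d16.symm) (Finset.le_sup (Finset.mem_univ (6:Fin 7))))
  fin_cases w <;> simp [G2d10, G2d11, G2d12, G2d13, G2d14, G2d15, G2d16]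

lemma G2e2 : ecc G2 (2:Fin 7) = 2 := by
  refine le_antisymm (Finset.sup_le fun w _ => ?_) (le_trans (le_of_eq G2d26.symm) (Finset.le_sup (Finset.mem_univ (6:Fin 7))))
  fin_cases w <;> simp [G2d20, G2d21, G2d22, G2d23, G2d24, G2d25, G2d26]

lemma G2e3 : ecc G2 (3:Fin 7) = 2 := by
  refine le_antisymm (Finset.sup_le fun w _ => ?_) (le_trans (le_of_eq G2d35.symm) (Finset.le_sup (Finset.mem_univ (5:Fin 7))))
  fin_cases w <;> simp [G2d30, G2d31, G2d32, G2d33, G2d34, G2d35, G2d36]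

lemma G2e4 : ecc G2 (4:Fin 7) = 2 := by
  refine le_antisymm (Finset.sup_le fun w _ => ?_) (le_trans (le_of_eq G2d45.symm) (Finset.le_sup (Finset.mem_univ (5:Fin 7))))
  fin_cases w <;> simp [G2d40, G2d41, G2d42, G2d43, G2d44, G2d45, G2d46]

lemma G2e5 : ecc G2 (5:Fin 7) = 3 := by
  refine le_antisymm (Finset.sup_le fun w _ => ?_) (le_trans (le_of_eq G2d56.symm) (Finset.le_sup (Finset.mem_univ (6:Fin 7))))
  fin_cases w <;> simp [G2d50, G2d51, G2d52, G2d53, G2d54, G2d55, G2d56]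

lemma G2e6 : ecc G2 (6:Fin 7) = 3 := by
  refine le_antisymm (Finset.sup_le fun w _ => ?_) (le_trans (le_of_eq G2d65.symm) (Finset.le_sup (Finset.mem_univ (5:Fin 7))))
  fin_cases w <;> simp [G2d60, G2d61, G2d62, G2d63, G2d64, G2d65, G2d66]


theorem two_graphs_attain_eci_65 :
    ∃ (G H : SimpleGraph (Fin 7)) (_ : DecidableRel G.Adj) (_ : DecidableRel H.Adj),
      G.Connected ∧ H.Connected ∧
      G.edgeFinset.card = 15 ∧ H.edgeFinset.card = 15 ∧
      (∑ v, G.degree v * ecc G v) = 65 ∧ (∑ v, H.degree v * ecc H v) = 65 ∧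
      IsEmpty (G ≃g H) := by
  refine ⟨G1, G2, inferInstance, inferInstance, G1conn, G2conn, by decide, by decide, ?_, ?_, ?_⟩
  · rw [Fin.sum_univ_seven, G1e0, G1e1, G1e2, G1e3, G1e4, G1e5, G1e6]
    norm_num [show G1.degree 0 = 5 by decide, show G1.degree 1 = 5 by decide,
      show G1.degree 2 = 5 by decide, show G1.degree 3 = 5 by decide,
      show G1.degree 4 = 5 by decide, show G1.degree 5 = 4 by decide,
      show G1.degree 6 = 1 by decide]
  · rw [Fin.sum_univ_seven, G2e0, G2e1, G2e2, G2e3, G2e4, G2e5, G2e6]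
    norm_num [show G2.degree 0 = 5 by decide, show G2.degree 1 = 5 by decide,
      show G2.degree 2 = 5 by decide, show G2.degree 3 = 5 by decide,
      show G2.degree 4 = 5 by decide, show G2.degree 5 = 3 by decide,
      show G2.degree 6 = 2 by decide]
  · constructor
    intro e
    have h1 : G2.degree (e 6) = G1.degree 6 := by
      rw [← SimpleGraph.card_neighborSet_eq_degree, ← SimpleGraph.card_neighborSet_eq_degree]
      exact Fintype.card_congr (e.mapNeighborSet 6).symm
    have h2 : G1.degree 6 = 1 := by decide
    have h3 : ∀ w : Fin 7, G2.degree w ≠ 1 := by decide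
    exact h3 (e 6) (h1.trans h2)
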